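/- arXiv:1806.08131 — 5 statements merged into one kernel-verified Lean document; each statement's English description precedes it below -/
import Mathlib

section
/- If no minimal support of the western neighbor (x − 1, y) belongs to D(x, y), then D(x, y) ⊆ D(x, y − 1) ∪ {(x, y)}. -/
/-- The lexicographic order on `ℤ × ℤ`. -/
def lexLe (a b : ℤ × ℤ) : Prop :=
  a.1 < b.1 ∨ (a.1 = b.1 ∧ a.2 ≤ b.2)

/-- The support set `D(x, y)` of starting positions of occurrences that cover `(x, y)`. -/
def SupportSet (w h : ℤ) (M : Set (ℤ × ℤ)) (p : ℤ × ℤ) : Set (ℤ × ℤ) :=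
  {q | q ∈ M ∧ p.1 - w + 1 ≤ q.1 ∧ q.1 ≤ p.1 ∧ p.2 - h + 1 ≤ q.2 ∧ q.2 ≤ p.2}

/-- `q` is a minimal support of `p`: it belongs to `D(p)` and its difference from `p`
is lexicographically minimal among elements of `D(p)`. -/
def MinSupport (w h : ℤ) (M : Set (ℤ × ℤ)) (p q : ℤ × ℤ) : Prop :=
  q ∈ SupportSet w h M p ∧
    ∀ r ∈ SupportSet w h M p,
      lexLe (p.1 - q.1, p.2 - q.2) (p.1 - r.1, p.2 - r.2)

theorem support_west_neighbor (w h : ℤ) (hw : 1 ≤ w) (hh : 1 ≤ h)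
    (M : Set (ℤ × ℤ)) (x y : ℤ)
    (hwest : ∀ q : ℤ × ℤ, MinSupport w h M (x - 1, y) q →
      q ∉ SupportSet w h M (x, y)) :
    SupportSet w h M (x, y) ⊆ SupportSet w h M (x, y - 1) ∪ {(x, y)} := by

  intro q hq
  obtain ⟨hqM, hq1, hq2, hq3, hq4⟩ := hq
  by_cases hxy : q = (x, y)
  · right; simp [hxy]
  left
  rcases lt_or_eq_of_le hq4 with hlt | heq
  · exact ⟨hqM, by simpa using hq1, hq2, by simp; omega, by simp; omega⟩
  · -- q.2 = y; show contradiction. First q.1 < x.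
    have hq1lt : q.1 < x := by
      rcases lt_or_eq_of_le hq2 with h | h
      · exact h
      · exact absurd (Prod.ext h heq) hxy
    -- q ∈ D(x-1, y)
    have hqS : q ∈ SupportSet w h M (x - 1, y) :=
      ⟨hqM, by simp; omega, by simp; omega, by simp; omega, by simp; omega⟩
    -- find greatest first coordinate
    obtain ⟨a, ⟨ra, hraS, hra1⟩, hamax⟩ :=
      Int.exists_greatest_of_bdd
        ⟨x - 1, fun z ⟨r, hr, hr1⟩ => hr1 ▸ hr.2.2.1⟩
        ⟨q.1, q, hqS, rfl⟩
        (P := fun a => ∃ r ∈ SupportSet w h M (x - 1, y), r.1 = a)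
    -- find greatest second coordinate among those with first coord a
    obtain ⟨b, hbS, hbmax⟩ :=
      Int.exists_greatest_of_bdd
        ⟨y, fun z hz => hz.2.2.2.2⟩
        ⟨ra.2, by show (a, ra.2) ∈ _; rw [← hra1, Prod.mk.eta]; exact hraS⟩
        (P := fun b => (a, b) ∈ SupportSet w h M (x - 1, y))
    have hmin : MinSupport w h M (x - 1, y) (a, b) := by
      refine ⟨hbS, fun r hr => ?_⟩
      have hr1 : r.1 ≤ a := hamax r.1 ⟨r, hr, rfl⟩
      rcases lt_or_eq_of_le hr1 with h1 | h1
      · left; simp; omega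
      · right
        constructor
        · simp [h1]
        · have : (a, r.2) ∈ SupportSet w h M (x - 1, y) := by
            obtain ⟨h1', h2, h3, h4, h5⟩ := hr
            exact ⟨by rwa [← h1, Prod.mk.eta], by simpa [← h1] using h2,
              by simpa [← h1] using h3, h4, h5⟩
          have := hbmax r.2 this
          simp; omega
    have : (a, b) ∈ SupportSet w h M (x, y) := by
      obtain ⟨h1', h2, h3, h4, h5⟩ := hbS
      have haq : q.1 ≤ a := hamax q.1 ⟨q, hqS, rfl⟩
      exact ⟨h1', by simp at h2 ⊢; omega, by simp at h3 ⊢; omega,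
        by simp at h4 ⊢; omega, by simp at h5 ⊢; omega⟩
    exact absurd this (hwest (a, b) hmin)
end

section
/- If no minimal support of the northern neighbor (x, y − 1) belongs to D(x, y), then D(x, y) ⊆ D(x − 1, y) ∪ {(x, y)}. -/
theorem support_north_neighbor (w h : ℤ) (hw : 1 ≤ w) (hh : 1 ≤ h)
    (M : Set (ℤ × ℤ)) (x y : ℤ)
    (hnorth : ∀ q : ℤ × ℤ, MinSupport w h M (x, y - 1) q →
      q ∉ SupportSet w h M (x, y)) :
    SupportSet w h M (x, y) ⊆ SupportSet w h M (x - 1, y) ∪ {(x, y)} := by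
  intro q hq
  obtain ⟨hqM, h1, h2, h3, h4⟩ := hq
  by_cases hqeq : q = (x, y)
  · right; simp [hqeq]
  by_cases hx1 : q.1 ≤ x - 1
  · left
    exact ⟨hqM, by omega, by omega, by omega, by omega⟩
  · -- q.1 = x, and q.2 ≤ y - 1
    have hqx : q.1 = x := by omega
    have hqy : q.2 ≤ y - 1 := by
      rcases lt_or_eq_of_le h4 with h | h
      · omega
      · exfalso; apply hqeq; ext <;> simp [hqx, h]
    -- the set of second coordinates t with (x, t) ∈ D(x, y-1)
    set P : ℤ → Prop := fun t => (x, t) ∈ SupportSet w h M (x, y - 1) with hP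
    have hPq : P q.2 := by
      refine ⟨?_, by omega, by omega, by omega, by omega⟩
      have : (x, q.2) = q := by ext <;> simp [hqx]
      rw [this]; exact hqM
    obtain ⟨t, hPt, htmax⟩ := Int.exists_greatest_of_bdd (P := P)
      ⟨y - 1, fun z hz => hz.2.2.2.2⟩ ⟨q.2, hPq⟩
    exfalso
    apply hnorth (x, t)
    · constructor
      · exact hPt
      · intro r hr
        rcases lt_or_eq_of_le hr.2.2.1 with heq | heq
        · left; simpa using by omega
        · right
          constructor
          · simp [heq]
          · have : P r.2 := by
              have : (x, r.2) = r := by ext <;> simp [heq]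
              show (x, r.2) ∈ SupportSet w h M (x, y - 1); rw [this]; exact hr
            have := htmax r.2 this
            simp; omega
    · have ht1 : y - h + 1 ≤ t := le_trans h3 (htmax q.2 hPq)
      exact ⟨hPt.1, by omega, by omega, by omega, le_trans hPt.2.2.2.2 (by omega)⟩
end

section
/- If no minimal support of the western neighbor (x − 1, y) belongs to D(x, y) and no minimal support of the northern neighbor (x, y − 1) belongs to D(x, y), then D(x, y) ⊆ {(x, y)}. -/
lemma exists_minSupport (w h : ℤ) (M : Set (ℤ × ℤ)) (p : ℤ × ℤ)
    (hne : (SupportSet w h M p).Nonempty) : ∃ q, MinSupport w h M p q := by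
  classical
  set D := SupportSet w h M p with hD
  -- least first difference
  obtain ⟨a, ⟨r₀, hr₀, ha₀⟩, ha⟩ :
      ∃ a, (∃ r ∈ D, p.1 - r.1 = a) ∧ ∀ z, (∃ r ∈ D, p.1 - r.1 = z) → a ≤ z := by
    apply Int.exists_least_of_bdd
    · refine ⟨0, ?_⟩
      rintro z ⟨r, hr, hz⟩
      have := hr.2.2.1
      omega
    · obtain ⟨r, hr⟩ := hne
      exact ⟨p.1 - r.1, r, hr, rfl⟩
  -- least second difference among those achieving a
  obtain ⟨b, ⟨q, hq, hqa, hqb⟩, hb⟩ :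
      ∃ b, (∃ r ∈ D, p.1 - r.1 = a ∧ p.2 - r.2 = b) ∧
        ∀ z, (∃ r ∈ D, p.1 - r.1 = a ∧ p.2 - r.2 = z) → b ≤ z := by
    apply Int.exists_least_of_bdd
    · refine ⟨0, ?_⟩
      rintro z ⟨r, hr, _, hz⟩
      have := hr.2.2.2.2
      omega
    · exact ⟨p.2 - r₀.2, r₀, hr₀, ha₀, rfl⟩
  refine ⟨q, hq, ?_⟩
  intro r hr
  have h1 : a ≤ p.1 - r.1 := ha _ ⟨r, hr, rfl⟩
  rcases lt_or_eq_of_le h1 with h | h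
  · left; simpa [hqa] using h
  · right
    refine ⟨by simp [hqa, h], ?_⟩
    have := hb (p.2 - r.2) ⟨r, hr, h.symm, rfl⟩
    simpa [hqb] using this

theorem support_both_neighbors (w h : ℤ) (hw : 1 ≤ w) (hh : 1 ≤ h)
    (M : Set (ℤ × ℤ)) (x y : ℤ)
    (hwest : ∀ q : ℤ × ℤ, MinSupport w h M (x - 1, y) q →
      q ∉ SupportSet w h M (x, y))
    (hnorth : ∀ q : ℤ × ℤ, MinSupport w h M (x, y - 1) q →
      q ∉ SupportSet w h M (x, y)) :
    SupportSet w h M (x, y) ⊆ {(x, y)} := by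
  intro q hq
  obtain ⟨hqM, h1, h2, h3, h4⟩ := hq
  by_contra hne
  have hne' : q ≠ (x, y) := hne
  -- either q.1 ≤ x - 1, or q.1 = x and q.2 ≤ y - 1
  rcases lt_or_eq_of_le h2 with hx | hx
  · -- west case: q ∈ D(x-1, y)
    have hqD : q ∈ SupportSet w h M (x - 1, y) := ⟨hqM, by omega, by omega, by omega, by omega⟩
    obtain ⟨m, hm⟩ := exists_minSupport w h M (x - 1, y) ⟨q, hqD⟩
    apply hwest m hm
    obtain ⟨⟨hmM, hm1, hm2, hm3, hm4⟩, hmin⟩ := hm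
    have := hmin q hqD
    rcases this with h | h
    · simp only at h
      exact ⟨hmM, by omega, by omega, by omega, by omega⟩
    · simp only at h
      obtain ⟨he, _⟩ := h
      exact ⟨hmM, by omega, by omega, by omega, by omega⟩
  · -- q.1 = x, so q.2 < y
    have hy : q.2 < y := by
      rcases lt_or_eq_of_le h4 with hy | hy
      · exact hy
      · exact absurd (Prod.ext hx hy) hne'
    have hqD : q ∈ SupportSet w h M (x, y - 1) := ⟨hqM, by omega, by omega, by omega, by omega⟩
    obtain ⟨m, hm⟩ := exists_minSupport w h M (x, y - 1) ⟨q, hqD⟩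
    apply hnorth m hm
    obtain ⟨⟨hmM, hm1, hm2, hm3, hm4⟩, hmin⟩ := hm
    have := hmin q hqD
    rcases this with h | h
    · simp only at h
      exact ⟨hmM, by omega, by omega, by omega, by omega⟩
    · simp only at h
      obtain ⟨he, h2'⟩ := h
      exact ⟨hmM, by omega, by omega, by omega, by omega⟩
end

section
/- The dynamic programming recurrence for minimal supports holds: if D(x, y) is nonempty and (x*, y*) is a minimal support of (x, y), then (x*, y*) = (x, y), or (x*, y*) is a minimal support of (x − 1, y), or (x*, y*) is a minimal support of (x, y − 1). -/
theorem minSupport_recurrence (w h : ℤ) (hw : 1 ≤ w) (hh : 1 ≤ h)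
    (M : Set (ℤ × ℤ)) (x y : ℤ) (q : ℤ × ℤ)
    (hne : (SupportSet w h M (x, y)).Nonempty)
    (hq : MinSupport w h M (x, y) q) :
    q = (x, y) ∨ MinSupport w h M (x - 1, y) q ∨ MinSupport w h M (x, y - 1) q := by
  obtain ⟨⟨hqM, h1, h2, h3, h4⟩, hmin⟩ := hq
  simp only [SupportSet, Set.mem_setOf_eq] at h1 h2 h3 h4 ⊢
  by_cases hx : q.1 = x
  · by_cases hy : q.2 = y
    · left; exact Prod.ext hx hy
    · right; right
      refine ⟨⟨hqM, by omega, by omega, by omega, by omega⟩, ?_⟩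
      rintro ⟨r1, r2⟩ ⟨hrM, hr1, hr2, hr3, hr4⟩
      simp only at hr1 hr2 hr3 hr4
      by_cases hr : y - h + 1 ≤ r2
      · have := hmin (r1, r2) ⟨hrM, hr1, by omega, hr, by omega⟩
        simp only [lexLe] at this ⊢
        omega
      · simp only [lexLe]; omega
  · right; left
    refine ⟨⟨hqM, by omega, by omega, by omega, by omega⟩, ?_⟩
    rintro ⟨r1, r2⟩ ⟨hrM, hr1, hr2, hr3, hr4⟩
    simp only at hr1 hr2 hr3 hr4
    by_cases hr : x - w + 1 ≤ r1
    · have := hmin (r1, r2) ⟨hrM, hr, by omega, by omega, by omega⟩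
      simp only [lexLe] at this ⊢
      omega
    · simp only [lexLe]; omega
end

section
/- If 1 ≤ H, 1 ≤ W, and C covers T, then the first row and the last row of T are each covered, as 1-dimensional strings, by their own length-w prefix: for every j < W there exists x with x ≤ j < x + w, x + w ≤ W, and T 0 (x + t) = T 0 t for all t < w; and for every j < W there exists x with x ≤ j < x + w, x + w ≤ W, and T (H − 1) (x + t) = T (H − 1) t for all t < w. -/
/-- `C` occurs in `T` at position `(i, j)` (top-left corner, 0-indexed). -/
def Occurs {α : Type*} {H W h w : ℕ} (T : Matrix (Fin H) (Fin W) α)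
    (C : Matrix (Fin h) (Fin w) α) (i j : ℕ) : Prop :=
  ∃ (hH : i + h ≤ H) (hW : j + w ≤ W),
    ∀ (y x : ℕ) (hy : y < h) (hx : x < w),
      T ⟨i + y, by omega⟩ ⟨j + x, by omega⟩ = C ⟨y, hy⟩ ⟨x, hx⟩

/-- `C` covers `T`: every position of `T` lies within some occurrence of `C`. -/
def Covers {α : Type*} {H W h w : ℕ} (T : Matrix (Fin H) (Fin W) α)
    (C : Matrix (Fin h) (Fin w) α) : Prop :=
  ∀ Y < H, ∀ X < W, ∃ i j,
    i ≤ Y ∧ Y < i + h ∧ j ≤ X ∧ X < j + w ∧ Occurs T C i j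

theorem covers_first_last_row_prefix_cover {α : Type*} {H W h w : ℕ}
    (T : Matrix (Fin H) (Fin W) α) (C : Matrix (Fin h) (Fin w) α)
    (hH : 1 ≤ H) (hW : 1 ≤ W) (hcov : Covers T C) :
    (∀ j < W, ∃ x, x ≤ j ∧ j < x + w ∧ ∃ (hxw : x + w ≤ W),
        ∀ (t : ℕ) (ht : t < w),
          T ⟨0, hH⟩ ⟨x + t, by omega⟩ = T ⟨0, hH⟩ ⟨t, by omega⟩) ∧
    (∀ j < W, ∃ x, x ≤ j ∧ j < x + w ∧ ∃ (hxw : x + w ≤ W),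
        ∀ (t : ℕ) (ht : t < w),
          T ⟨H - 1, by omega⟩ ⟨x + t, by omega⟩ = T ⟨H - 1, by omega⟩ ⟨t, by omega⟩) := by
  constructor
  · -- first row
    -- base occurrence at (0,0)
    obtain ⟨i0, j0, hi0, hY0, hj0, hX0, hwH0, hwW0, hocc0⟩ := hcov 0 hH 0 hW
    have hi0' : i0 = 0 := by omega
    have hj0' : j0 = 0 := by omega
    subst hi0' hj0'
    intro j hj
    obtain ⟨i, x, hi, hYi, hxj, hjx, hiH, hxW, hocc⟩ := hcov 0 hH j hj
    have hi' : i = 0 := by omega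
    subst hi'
    refine ⟨x, hxj, hjx, hxW, fun t ht => ?_⟩
    have e1 := hocc 0 t (by omega) ht
    have e0 := hocc0 0 t (by omega) ht
    have : T ⟨0, hH⟩ ⟨x + t, by omega⟩ = T ⟨0 + 0, by omega⟩ ⟨x + t, by omega⟩ := by
      congr 1
    rw [this, e1]
    have : T ⟨0, hH⟩ ⟨t, by omega⟩ = T ⟨0 + 0, by omega⟩ ⟨0 + t, by omega⟩ := by
      congr 1 <;> exact Fin.mk_eq_mk.mpr (by omega)
    rw [this, e0]
  · -- last row
    obtain ⟨i0, j0, hi0, hY0, hj0, hX0, hwH0, hwW0, hocc0⟩ := hcov (H - 1) (by omega) 0 hW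
    have hj0' : j0 = 0 := by omega
    subst hj0'
    have hi0' : i0 = H - h := by omega
    have hh1 : 1 ≤ h := by omega
    subst hi0'
    intro j hj
    obtain ⟨i, x, hi, hYi, hxj, hjx, hiH, hxW, hocc⟩ := hcov (H - 1) (by omega) j hj
    have hi' : i = H - h := by omega
    subst hi'
    refine ⟨x, hxj, hjx, hxW, fun t ht => ?_⟩
    have e1 := hocc (h - 1) t (by omega) ht
    have e0 := hocc0 (h - 1) t (by omega) ht
    have : T ⟨H - 1, by omega⟩ ⟨x + t, by omega⟩
        = T ⟨H - h + (h - 1), by omega⟩ ⟨x + t, by omega⟩ := by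
      congr 1
      exact Fin.mk_eq_mk.mpr (by omega)
    rw [this, e1]
    have : T ⟨H - 1, by omega⟩ ⟨t, by omega⟩
        = T ⟨H - h + (h - 1), by omega⟩ ⟨0 + t, by omega⟩ := by
      congr 1 <;> exact Fin.mk_eq_mk.mpr (by omega)
    rw [this, e0]
end
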